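/- arXiv:nlin/0611017 — 3 statements merged into one kernel-verified Lean document; each statement's English description precedes it below -/
import Mathlib

section
/- Let L ∈ ℤ⁺ with L ≥ 2 and a = Σ_{i=0}^{L−1} a_i·2^i ∈ {0,…,2^L−1}. If there exists x ∈ {1,…,L−1} such that a ⋘_L x = a, then there exist τ dividing gcd(L,x) and a* ∈ {0,…,2^τ−1} such that a = Σ_{i=0}^{L/τ−1} a*·2^{τi} (i.e., a consists of repeated τ-bit patterns with τ < L). -/
/-- L-bit left circular shift of `a` by `x`. -/
def rotl (L : ℕ) (x : ℤ) (a : ℕ) : ℕ :=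
  ∑ i ∈ Finset.range L, if a.testBit i then 2 ^ ((((i : ℤ) + x) % (L : ℤ)).toNat) else 0

/-- L-bit right circular shift of `a` by `x`. -/
def rotr (L : ℕ) (x : ℤ) (a : ℕ) : ℕ := rotl L (-x) a

theorem aux_mem_bitIndices_iff {n k : ℕ} : k ∈ n.bitIndices ↔ n.testBit k := by
  induction n using Nat.binaryRec generalizing k with
  | zero => simp
  | bit b n ih =>
    cases b <;> cases k <;>
      simp_all [Nat.bitIndices_bit_true, Nat.bitIndices_bit_false,
        Nat.testBit_bit_zero, Nat.testBit_bit_succ, Nat.testBit_add_one, Nat.mul_add_div]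

theorem aux_testBit_geomSum (s : Finset ℕ) (k : ℕ) :
    (∑ i ∈ s, 2 ^ i).testBit k ↔ k ∈ s := by
  rw [← aux_mem_bitIndices_iff, ← List.mem_toFinset, Finset.toFinset_bitIndices_twoPowSum]

theorem aux_self_eq_sum_bits (L a : ℕ) (ha : a < 2 ^ L) :
    a = ∑ i ∈ (Finset.range L).filter (fun i => a.testBit i), 2 ^ i := by
  apply Nat.eq_of_testBit_eq
  intro k
  rw [Bool.eq_iff_iff, aux_testBit_geomSum]
  simp only [Finset.mem_filter, Finset.mem_range]
  constructor
  · intro h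
    refine ⟨?_, h⟩
    by_contra hk
    exact absurd h (by simp [Nat.testBit_lt_two_pow
      (lt_of_lt_of_le ha (Nat.pow_le_pow_right (by norm_num) (le_of_not_gt hk)))])
  · exact fun h => h.2

theorem aux_bits_shift (L : ℕ) (hL : 0 < L) (a : ℕ) (ha : a < 2 ^ L) (x : ℕ)
    (hfix : rotl L (x : ℤ) a = a) :
    ∀ i < L, a.testBit ((i + x) % L) = a.testBit i := by
  classical
  set S : Finset ℕ := (Finset.range L).filter (fun i => a.testBit i) with hS
  have haS : a = ∑ i ∈ S, 2 ^ i := aux_self_eq_sum_bits L a ha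
  have hf : ∀ i, i < L → ((((i : ℤ) + x) % (L : ℤ)).toNat) = (i + x) % L := by
    intro i hi
    have : ((i : ℤ) + x) % (L : ℤ) = (((i + x) % L : ℕ) : ℤ) := by
      push_cast; ring_nf
    rw [this, Int.toNat_natCast]
  have hrot : rotl L (x : ℤ) a = ∑ i ∈ S, 2 ^ ((i + x) % L) := by
    rw [rotl, ← Finset.sum_filter, ← hS]
    apply Finset.sum_congr rfl
    intro i hi
    rw [hf i (Finset.mem_range.1 (Finset.mem_filter.1 hi).1)]
  have hinj : ∀ i ∈ S, ∀ j ∈ S, (i + x) % L = (j + x) % L → i = j := by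
    intro i hi j hj h
    have hi' : i < L := Finset.mem_range.1 (Finset.mem_filter.1 hi).1
    have hj' : j < L := Finset.mem_range.1 (Finset.mem_filter.1 hj).1
    have : i % L = j % L := Nat.ModEq.add_right_cancel' x h
    rwa [Nat.mod_eq_of_lt hi', Nat.mod_eq_of_lt hj'] at this
  have himg : S.image (fun i => (i + x) % L) = S := by
    apply Finset.geomSum_injective (n := 2) le_rfl
    simp only
    rw [Finset.sum_image hinj, ← hrot, hfix, haS]
  intro i hi
  by_cases hbi : a.testBit i
  · have : i ∈ S := Finset.mem_filter.2 ⟨Finset.mem_range.2 hi, hbi⟩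
    have h2 : (i + x) % L ∈ S := himg ▸ Finset.mem_image_of_mem _ this
    simp [hbi, (Finset.mem_filter.1 h2).2]
  · by_contra h
    have hbi' : a.testBit i = false := by simpa using hbi
    have hb2 : a.testBit ((i + x) % L) = true := by
      cases hh : a.testBit ((i + x) % L)
      · exact absurd (hh.trans hbi'.symm) h
      · rfl
    have : (i + x) % L ∈ S :=
      Finset.mem_filter.2 ⟨Finset.mem_range.2 (Nat.mod_lt _ hL), hb2⟩
    rw [← himg] at this
    obtain ⟨j, hj, hje⟩ := Finset.mem_image.1 this
    have hj' : j < L := Finset.mem_range.1 (Finset.mem_filter.1 hj).1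
    have : j = i := by
      have : j % L = i % L := Nat.ModEq.add_right_cancel' x hje
      rwa [Nat.mod_eq_of_lt hj', Nat.mod_eq_of_lt hi] at this
    exact hbi (this ▸ (Finset.mem_filter.1 hj).2)

theorem aux_bits_shift_iter (L : ℕ) (hL : 0 < L) (a x : ℕ)
    (hstep : ∀ i < L, a.testBit ((i + x) % L) = a.testBit i) :
    ∀ k : ℕ, ∀ i < L, a.testBit ((i + k * x) % L) = a.testBit i := by
  intro k
  induction k with
  | zero => intro i hi; simp [Nat.mod_eq_of_lt hi]
  | succ k ih =>
    intro i hi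
    have h1 : (i + (k + 1) * x) % L = (((i + k * x) % L) + x) % L := by
      rw [Nat.mod_add_mod]; ring_nf
    rw [h1, hstep _ (Nat.mod_lt _ hL), ih i hi]

theorem aux_reach (L x : ℕ) (hL : 0 < L) (i j : ℕ) (hj : j < L)
    (hmod : i % Nat.gcd L x = j % Nat.gcd L x) :
    ∃ k : ℕ, (i + k * x) % L = j := by
  set g := Nat.gcd L x with hg
  have hbez : (g : ℤ) = L * Nat.gcdA L x + x * Nat.gcdB L x := Nat.gcd_eq_gcd_ab L x
  have hdvd : (g : ℤ) ∣ ((j : ℤ) - i) := (Nat.modEq_iff_dvd).1 hmod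
  obtain ⟨m, hm⟩ := hdvd
  set v : ℤ := m * Nat.gcdB L x with hv
  have hLpos : (0 : ℤ) < L := by exact_mod_cast hL
  set k : ℕ := (v % L).toNat with hk
  have hknn : (k : ℤ) = v % L := Int.toNat_of_nonneg (Int.emod_nonneg v (by omega))
  have hvk : (L : ℤ) ∣ v - k := ⟨v / L, by rw [hknn, Int.emod_def]; ring⟩
  obtain ⟨c, hc⟩ := hvk
  refine ⟨k, ?_⟩
  have hmodeq : (i + k * x) ≡ j [MOD L] := by
    rw [Nat.modEq_iff_dvd]
    refine ⟨m * Nat.gcdA L x + x * c, ?_⟩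
    push_cast
    have : (j : ℤ) - i = m * ((L : ℤ) * Nat.gcdA L x + x * Nat.gcdB L x) := by
      rw [hm, hbez]; ring
    nlinarith [this, hc]
  have := hmodeq.symm
  rw [Nat.ModEq] at this
  rw [← Nat.mod_eq_of_lt hj]
  exact this.symm

theorem aux_sum_range_two_pow (g : ℕ) : ∑ r ∈ Finset.range g, 2 ^ r = 2 ^ g - 1 := by
  induction g with
  | zero => simp
  | succ g ih => rw [Finset.sum_range_succ, ih]; have := Nat.one_le_two_pow (n := g); omega

theorem aux_sum_if_lt (g : ℕ) (b : ℕ → Bool) :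
    ∑ r ∈ Finset.range g, (if b r then 2 ^ r else 0) < 2 ^ g := by
  have h1 : ∑ r ∈ Finset.range g, (if b r then 2 ^ r else 0) ≤ ∑ r ∈ Finset.range g, 2 ^ r :=
    Finset.sum_le_sum fun i _ => by split <;> simp
  have := aux_sum_range_two_pow g
  have := Nat.one_le_two_pow (n := g)
  omega

theorem aux_sum_blocks (F : ℕ → ℕ) (g n : ℕ) :
    ∑ i ∈ Finset.range (g * n), F i
      = ∑ q ∈ Finset.range n, ∑ r ∈ Finset.range g, F (g * q + r) := by
  induction n with
  | zero => simp
  | succ n ih =>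
    rw [Nat.mul_succ, Finset.sum_range_add, ih, Finset.sum_range_succ]

theorem stmt5 (L : ℕ) (hL : 2 ≤ L) (a : ℕ) (ha : a < 2 ^ L)
    (x : ℕ) (hx1 : 1 ≤ x) (hx2 : x ≤ L - 1) (hfix : rotl L (x : ℤ) a = a) :
    ∃ τ : ℕ, τ ∣ Nat.gcd L x ∧ ∃ a' : ℕ, a' < 2 ^ τ ∧
      a = ∑ i ∈ Finset.range (L / τ), a' * 2 ^ (τ * i) := by
  have hLpos : 0 < L := by omega
  set g := Nat.gcd L x with hg
  have hgpos : 0 < g := Nat.gcd_pos_of_pos_left x hLpos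
  have hgdvd : g ∣ L := Nat.gcd_dvd_left L x
  have hgle : g ≤ L := Nat.le_of_dvd hLpos hgdvd
  have hstep := aux_bits_shift L hLpos a ha x hfix
  have hiter := aux_bits_shift_iter L hLpos a x hstep
  have hperiod : ∀ i < L, ∀ j < L, i % g = j % g → a.testBit i = a.testBit j := by
    intro i hi j hj hmod
    obtain ⟨k, hk⟩ := aux_reach L x hLpos i j hj hmod
    rw [← hk, hiter k i hi]
  refine ⟨g, dvd_refl g, ∑ r ∈ Finset.range g, (if a.testBit r then 2 ^ r else 0),
    aux_sum_if_lt g _, ?_⟩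
  have hmul : g * (L / g) = L := Nat.mul_div_cancel' hgdvd
  have h1 : a = ∑ i ∈ Finset.range L, (if a.testBit i then 2 ^ i else 0) :=
    (aux_self_eq_sum_bits L a ha).trans (Finset.sum_filter _ _)
  have h2 : ∑ i ∈ Finset.range (g * (L / g)), (if a.testBit i then 2 ^ i else 0)
      = ∑ q ∈ Finset.range (L / g),
          (∑ r ∈ Finset.range g, (if a.testBit r then 2 ^ r else 0)) * 2 ^ (g * q) := by
    rw [aux_sum_blocks]
    apply Finset.sum_congr rfl
    intro q hq
    have hq' : q < L / g := Finset.mem_range.1 hq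
    have hlt : ∀ r < g, g * q + r < L := by
      intro r hr
      calc g * q + r < g * (q + 1) := by rw [Nat.mul_succ]; omega
      _ ≤ g * (L / g) := Nat.mul_le_mul_left g (by omega)
      _ = L := hmul
    have hbit : ∀ r < g, a.testBit (g * q + r) = a.testBit r := by
      intro r hr
      apply hperiod _ (hlt r hr) _ (lt_of_lt_of_le hr hgle)
      conv_lhs => rw [Nat.add_comm, Nat.add_mul_mod_self_left]
    rw [Finset.sum_mul]
    apply Finset.sum_congr rfl
    intro r hr
    have hr' : r < g := Finset.mem_range.1 hr
    rw [hbit r hr']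
    split
    · rw [pow_add]; ring
    · simp
  calc a = ∑ i ∈ Finset.range L, (if a.testBit i then 2 ^ i else 0) := h1
    _ = ∑ i ∈ Finset.range (g * (L / g)), (if a.testBit i then 2 ^ i else 0) := by rw [hmul]
    _ = _ := h2
end

section
/- Let L ≥ 2, x ∈ {1,…,L−1} with x ∣ L, and a ∈ {0,…,2^L−1}. If a ⋘_L x = a, then with a* = Σ_{i=0}^{x−1} a_i·2^i one has a = Σ_{i=0}^{L/x−1} a*·2^{xi}, i.e., a consists of L/x identical x-bit segments. -/
lemma sumBits (a n : ℕ) :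
    ∑ i ∈ Finset.range n, (if a.testBit i then 2 ^ i else 0) = a % 2 ^ n := by
  induction n with
  | zero => simp [Nat.mod_one]
  | succ n ih =>
    rw [Finset.sum_range_succ, ih, pow_succ, Nat.mod_mul, Nat.testBit_eq_decide_div_mod_eq]
    rcases Nat.mod_two_eq_zero_or_one (a / 2 ^ n) with h | h <;> simp [h, Nat.mul_comm]

lemma rotl_eq (L x a : ℕ) (hx1 : 1 ≤ x) (hxL : x < L) (ha : a < 2 ^ L) :
    rotl L (x : ℤ) a = (a % 2 ^ (L - x)) * 2 ^ x + a / 2 ^ (L - x) := by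
  have hsplit : Finset.range L = Finset.range (L - x) ∪ Finset.Ico (L - x) L := by
    rw [Finset.range_eq_Ico, Finset.range_eq_Ico, Finset.Ico_union_Ico_eq_Ico (Nat.zero_le _) (Nat.sub_le _ _)]
  have hdisj : Disjoint (Finset.range (L - x)) (Finset.Ico (L - x) L) := by
    simp [Finset.disjoint_left, Finset.mem_Ico]
    omega
  rw [rotl, hsplit, Finset.sum_union hdisj]
  have h1 : ∑ i ∈ Finset.range (L - x),
      (if a.testBit i then 2 ^ ((((i : ℤ) + x) % (L : ℤ)).toNat) else 0)
      = (a % 2 ^ (L - x)) * 2 ^ x := by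
    rw [← sumBits a (L - x), Finset.sum_mul]
    apply Finset.sum_congr rfl
    intro i hi
    simp only [Finset.mem_range] at hi
    have : (((i : ℤ) + x) % (L : ℤ)).toNat = i + x := by
      rw [Int.emod_eq_of_lt (by positivity) (by push_cast; omega)]
      omega
    rw [this]
    split <;> simp [pow_add]
  have h2 : ∑ i ∈ Finset.Ico (L - x) L,
      (if a.testBit i then 2 ^ ((((i : ℤ) + x) % (L : ℤ)).toNat) else 0)
      = a / 2 ^ (L - x) := by
    have := sumBits (a / 2 ^ (L - x)) x
    have hlt : a / 2 ^ (L - x) < 2 ^ x := by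
      rw [Nat.div_lt_iff_lt_mul (by positivity), ← pow_add]
      rw [Nat.add_sub_cancel' hxL.le]; exact ha
    rw [Nat.mod_eq_of_lt hlt] at this
    rw [← this]
    rw [Finset.sum_Ico_eq_sum_range]
    have hLx : L - (L - x) = x := by omega
    rw [hLx]
    apply Finset.sum_congr rfl
    intro j hj
    simp only [Finset.mem_range] at hj
    have ht : (a / 2 ^ (L - x)).testBit j = a.testBit (L - x + j) := by
      rw [Nat.testBit_eq_decide_div_mod_eq, Nat.testBit_eq_decide_div_mod_eq, Nat.div_div_eq_div_mul, ← pow_add]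
    have : ((((L - x + j : ℕ) : ℤ) + x) % (L : ℤ)).toNat = j := by
      have : (((L - x + j : ℕ) : ℤ) + x) = L + j := by push_cast; omega
      have hjL : (j:ℤ) < L := by exact_mod_cast lt_trans hj hxL
      rw [this, show (L:ℤ)+j = j + L*1 by ring, Int.add_mul_emod_self_left,
        Int.emod_eq_of_lt (by positivity) hjL]
      omega
    rw [this, ht]
  rw [h1, h2]

lemma seg (x : ℕ) (hx : 1 ≤ x) : ∀ k a, a < 2 ^ (x * k) →
    a / 2 ^ x = a % 2 ^ (x * (k - 1)) →
    a = ∑ i ∈ Finset.range k, (a % 2 ^ x) * 2 ^ (x * i) := by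
  intro k
  induction k with
  | zero =>
    intro a ha _
    simp only [Nat.mul_zero, pow_zero, Nat.lt_one_iff] at ha
    simp [ha]
  | succ k ih =>
    intro a ha hK
    rcases Nat.eq_zero_or_pos k with rfl | hk
    · have ha' : a < 2 ^ x := by simpa using ha
      simp [Nat.mod_eq_of_lt ha']
    · obtain ⟨k', rfl⟩ : ∃ k', k = k' + 1 := ⟨k - 1, by omega⟩
      set b := a / 2 ^ x with hb
      have hbm : b = a % 2 ^ (x * (k' + 1)) := by simpa using hK
      have hblt : b < 2 ^ (x * (k' + 1)) := hbm ▸ Nat.mod_lt _ (by positivity)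
      have hpow : (2:ℕ) ^ (x * (k' + 1)) = 2 ^ x * 2 ^ (x * k') := by
        rw [← pow_add, Nat.mul_succ, Nat.add_comm]
      have hb2 : b / 2 ^ x = b % 2 ^ (x * (k' + 1 - 1)) := by
        simp only [Nat.add_sub_cancel]
        conv_lhs => rw [hbm, hpow]
        rw [Nat.mod_mul_right_div_self, ← hb]
      have hbx : b % 2 ^ x = a % 2 ^ x := by
        rw [hbm, Nat.mod_mod_of_dvd _ (pow_dvd_pow 2 (Nat.le_mul_of_pos_right x (by omega)))]
      have hib := ih b hblt hb2
      rw [hbx] at hib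
      calc a = b * 2 ^ x + a % 2 ^ x := by
              rw [hb, Nat.mul_comm]; exact (Nat.div_add_mod a (2 ^ x)).symm
        _ = ∑ i ∈ Finset.range (k' + 1 + 1), (a % 2 ^ x) * 2 ^ (x * i) := by
            rw [Finset.sum_range_succ' (fun i => a % 2 ^ x * 2 ^ (x * i)) (k' + 1),
              hib, Finset.sum_mul]
            congr 1
            · exact Finset.sum_congr rfl fun i _ => by rw [Nat.mul_succ, pow_add]; ring
            · simp

theorem stmt7 (L x : ℕ) (hL : 2 ≤ L) (hx1 : 1 ≤ x) (hx2 : x ≤ L - 1) (hdvd : x ∣ L)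
    (a : ℕ) (ha : a < 2 ^ L) (hfix : rotl L (x : ℤ) a = a) :
    a = ∑ i ∈ Finset.range (L / x), (a % 2 ^ x) * 2 ^ (x * i) := by
  have hxL : x < L := by omega
  have heq : (a % 2 ^ (L - x)) * 2 ^ x + a / 2 ^ (L - x) = a := by
    rw [← rotl_eq L x a hx1 hxL ha, hfix]
  have hK : a / 2 ^ x = a % 2 ^ (L - x) := by
    conv_lhs => rw [← heq]
    rw [mul_comm, Nat.mul_add_div (by positivity)]
    have : a / 2 ^ (L - x) / 2 ^ x = 0 := by
      rw [Nat.div_div_eq_div_mul, ← pow_add, Nat.sub_add_cancel hxL.le]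
      exact Nat.div_eq_of_lt ha
    rw [this, Nat.add_zero]
  have hk : x * (L / x) = L := Nat.mul_div_cancel' hdvd
  have hk1 : x * (L / x - 1) = L - x := by
    rw [Nat.mul_sub, hk, Nat.mul_one]
  exact seg x hx1 (L / x) a (by rw [hk]; exact ha) (by rw [hk1]; exact hK)
end

section
/- Let L ≥ 2 and a, b ∈ {0,…,2^L−1}, and suppose a ⋘_L x = b has at least one solution x ∈ {0,…,L−1}. Then this solution is unique in {0,…,L−1} if and only if there do not exist τ < L with τ ∣ L and a* ∈ {0,…,2^τ−1} such that a = Σ_{i=0}^{L/τ−1} a*·2^{τi}. -/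
lemma bitsum_lt (f : ℕ → Bool) (m : ℕ) :
    (∑ i ∈ Finset.range m, if f i then 2 ^ i else 0) < 2 ^ m := by
  induction m with
  | zero => simp
  | succ m ih =>
    rw [Finset.sum_range_succ, pow_succ]
    have : (if f m then 2 ^ m else 0) ≤ 2 ^ m := by split <;> simp
    omega

lemma bitsum_testBit (f : ℕ → Bool) (m : ℕ) (j : ℕ) :
    (∑ i ∈ Finset.range m, if f i then 2 ^ i else 0).testBit j
      = (f j && decide (j < m)) := by
  induction m with
  | zero => simp
  | succ m ih =>
    rw [Finset.sum_range_succ]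
    have hlt := bitsum_lt f m
    have h2 : (∑ i ∈ Finset.range m, if f i then 2 ^ i else 0) + (if f m then 2 ^ m else 0)
        = 2 ^ m * (if f m then 1 else 0) + (∑ i ∈ Finset.range m, if f i then 2 ^ i else 0) := by
      split <;> ring
    rw [h2, Nat.testBit_two_pow_mul_add _ hlt]
    by_cases h : j < m
    · simp [h, ih, Nat.lt_succ_of_lt h]
    · by_cases h' : j = m
      · subst h'
        simp only [h, if_false, Nat.sub_self]
        rcases Bool.eq_false_or_eq_true (f j) with hf | hf <;>
          simp [hf, Nat.testBit_eq_decide_div_mod_eq, Nat.lt_succ_self]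
      · have hj1 : ¬ j < m + 1 := by omega
        have : (if f m then 1 else 0) < 2 ^ (j - m) := by
          have : 2 ≤ 2 ^ (j - m) := by
            calc 2 = 2 ^ 1 := rfl
            _ ≤ 2 ^ (j - m) := Nat.pow_le_pow_right (by norm_num) (by omega)
          split <;> omega
        simp [h, hj1, Nat.testBit_lt_two_pow this]

lemma block_lt (τ m c : ℕ) (hc : c < 2 ^ τ) :
    (∑ i ∈ Finset.range m, c * 2 ^ (τ * i)) < 2 ^ (τ * m) := by
  induction m with
  | zero => simp
  | succ m ih =>
    rw [Finset.sum_range_succ, Nat.mul_succ, pow_add]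
    have h1 : c * 2 ^ (τ * m) ≤ (2 ^ τ - 1) * 2 ^ (τ * m) := by
      apply Nat.mul_le_mul_right; omega
    have h2 : 0 < 2 ^ (τ * m) := Nat.pow_pos (by norm_num)
    nlinarith [ih]

lemma block_testBit (τ m c : ℕ) (hτ : 0 < τ) (hc : c < 2 ^ τ) (j : ℕ) :
    (∑ i ∈ Finset.range m, c * 2 ^ (τ * i)).testBit j
      = if j < τ * m then c.testBit (j % τ) else false := by
  induction m with
  | zero => simp
  | succ m ih =>
    rw [Finset.sum_range_succ]
    have hlt := block_lt τ m c hc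
    have h2 : (∑ i ∈ Finset.range m, c * 2 ^ (τ * i)) + c * 2 ^ (τ * m)
        = 2 ^ (τ * m) * c + (∑ i ∈ Finset.range m, c * 2 ^ (τ * i)) := by ring
    rw [h2, Nat.testBit_two_pow_mul_add _ hlt]
    have hms : τ * (m + 1) = τ * m + τ := by ring
    have hmc : m * τ = τ * m := by ring
    by_cases h : j < τ * m
    · have : j < τ * (m + 1) := by omega
      simp [h, ih, this]
    · by_cases h' : j < τ * (m + 1)
      · have hr : j - τ * m < τ := by omega
        have : j % τ = (j - τ * m) % τ := by
          conv_lhs => rw [show j = (j - τ * m) + m * τ by omega]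
          rw [Nat.add_mul_mod_self_right]
        rw [this, Nat.mod_eq_of_lt hr]
        simp [h, h']
      · have : ¬ (j - τ * m < τ) := by omega
        have hcf : c.testBit (j - τ * m) = false :=
          Nat.testBit_lt_two_pow (lt_of_lt_of_le hc (Nat.pow_le_pow_right (by norm_num) (by omega)))
        simp [h, h', hcf]


lemma emod_key (L i x : ℤ) (hL : 0 < L) (hi : 0 ≤ i) (hi2 : i < L) :
    ((i + x) % L - x) % L = i := by
  rw [Int.sub_emod, Int.emod_emod_of_dvd _ dvd_rfl, ← Int.sub_emod, add_sub_cancel_right,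
    Int.emod_eq_of_lt hi hi2]

lemma emod_mem (L y : ℤ) (hL : 0 < L) : 0 ≤ y % L ∧ y % L < L :=
  ⟨Int.emod_nonneg _ (by omega), Int.emod_lt_of_pos _ hL⟩

lemma rotl_eq_sum (L : ℕ) (hL : 0 < L) (x : ℤ) (a : ℕ) :
    rotl L x a = ∑ j ∈ Finset.range L,
      if a.testBit ((((j : ℤ) - x) % (L : ℤ)).toNat) then 2 ^ j else 0 := by
  have hL' : (0 : ℤ) < L := by exact_mod_cast hL
  unfold rotl
  refine Finset.sum_nbij' (i := fun i => (((i : ℤ) + x) % (L : ℤ)).toNat)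
    (j := fun j => (((j : ℤ) - x) % (L : ℤ)).toNat) ?_ ?_ ?_ ?_ ?_
  · intro i hi
    simp only [Finset.mem_range] at *
    have := emod_mem L ((i : ℤ) + x) hL'
    omega
  · intro j hj
    simp only [Finset.mem_range] at *
    have := emod_mem L ((j : ℤ) - x) hL'
    omega
  · intro i hi
    simp only [Finset.mem_range] at hi
    have h1 := emod_mem L ((i : ℤ) + x) hL'
    have : ((((((i : ℤ) + x) % (L : ℤ)).toNat : ℤ)) - x) % L = (i : ℤ) := by
      rw [Int.toNat_of_nonneg h1.1]
      exact emod_key L i x hL' (by positivity) (by exact_mod_cast hi)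
    show (((((((i : ℤ) + x) % (L : ℤ)).toNat : ℤ)) - x) % (L : ℤ)).toNat = i
    rw [this]; simp
  · intro j hj
    simp only [Finset.mem_range] at hj
    have h1 := emod_mem L ((j : ℤ) - x) hL'
    have : ((((((j : ℤ) - x) % (L : ℤ)).toNat : ℤ)) + x) % L = (j : ℤ) := by
      rw [Int.toNat_of_nonneg h1.1]
      rw [Int.add_emod, Int.emod_emod_of_dvd _ dvd_rfl, ← Int.add_emod, sub_add_cancel,
        Int.emod_eq_of_lt (by positivity) (by exact_mod_cast hj)]
    show (((((((j : ℤ) - x) % (L : ℤ)).toNat : ℤ)) + x) % (L : ℤ)).toNat = j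
    rw [this]; simp
  · intro i hi
    simp only [Finset.mem_range] at hi
    have h1 := emod_mem L ((i : ℤ) + x) hL'
    have : ((((((i : ℤ) + x) % (L : ℤ)).toNat : ℤ)) - x) % L = (i : ℤ) := by
      rw [Int.toNat_of_nonneg h1.1]
      exact emod_key L i x hL' (by positivity) (by exact_mod_cast hi)
    rw [this]
    simp

lemma rotl_lt (L : ℕ) (hL : 0 < L) (x : ℤ) (a : ℕ) : rotl L x a < 2 ^ L := by
  rw [rotl_eq_sum L hL x a]
  exact bitsum_lt _ _

lemma rotl_testBit (L : ℕ) (hL : 0 < L) (x : ℤ) (a : ℕ) (j : ℕ) :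
    (rotl L x a).testBit j
      = (a.testBit ((((j : ℤ) - x) % (L : ℤ)).toNat) && decide (j < L)) := by
  rw [rotl_eq_sum L hL x a]
  exact bitsum_testBit _ _ _
lemma toNat_mod_eq (τ : ℕ) (m n : ℤ) (hm : 0 ≤ m) (hn : 0 ≤ n)
    (h : m % (τ : ℤ) = n % (τ : ℤ)) : m.toNat % τ = n.toNat % τ := by
  have : ((m.toNat % τ : ℕ) : ℤ) = ((n.toNat % τ : ℕ) : ℤ) := by
    push_cast
    rw [Int.toNat_of_nonneg hm, Int.toNat_of_nonneg hn, h]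
  exact_mod_cast this

theorem stmt9 (L : ℕ) (hL : 2 ≤ L) (a b : ℕ) (ha : a < 2 ^ L) (hb : b < 2 ^ L)
    (hsol : ∃ x < L, rotl L (x : ℤ) a = b) :
    (∃! x : ℕ, x < L ∧ rotl L (x : ℤ) a = b) ↔
    ¬ (∃ τ < L, τ ∣ L ∧ ∃ a' : ℕ, a' < 2 ^ τ ∧
      a = ∑ i ∈ Finset.range (L / τ), a' * 2 ^ (τ * i)) := by
  have hL0 : 0 < L := by omega
  have hL' : (0 : ℤ) < (L : ℤ) := by exact_mod_cast hL0
  obtain ⟨x0, hx0L, hx0⟩ := hsol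
  set fA : ℤ → Bool := fun j => a.testBit ((j % (L : ℤ)).toNat) with hfA
  have fA_congr : ∀ {j k : ℤ}, j % (L : ℤ) = k % (L : ℤ) → fA j = fA k := by
    intro j k h; simp only [hfA, h]
  have fA_nat : ∀ n : ℕ, n < L → fA (n : ℤ) = a.testBit n := by
    intro n hn
    simp only [hfA]
    rw [Int.emod_eq_of_lt (by positivity) (by exact_mod_cast hn)]
    simp
  set S : AddSubgroup ℤ :=
    { carrier := {d | ∀ j : ℤ, fA (j + d) = fA j}
      zero_mem' := by intro j; simp
      add_mem' := by
        intro x y hx hy j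
        rw [← add_assoc, hy (j + x) , hx j]
      neg_mem' := by
        intro x hx j
        have := hx (j + -x)
        rw [add_assoc] at this
        simp at this
        rw [← this] } with hS
  have memS : ∀ d : ℤ, d ∈ S ↔ ∀ j : ℤ, fA (j + d) = fA j := fun d => Iff.rfl
  have hLS : (L : ℤ) ∈ S := by
    intro j
    refine fA_congr ?_
    conv_lhs => rw [show j + (L : ℤ) = j + (L : ℤ) * 1 by ring]
    rw [Int.add_mul_emod_self_left]
  have rotl_bit : ∀ (x : ℤ) (j : ℕ), j < L →
      (rotl L x a).testBit j = fA ((j : ℤ) - x) := by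
    intro x j hj
    rw [rotl_testBit L hL0 x a j]
    simp [hj, hfA]
  have key2 : ∀ (y d : ℤ), d ∈ S → rotl L (y + d) a = rotl L y a := by
    intro y d hd
    apply Nat.eq_of_testBit_eq
    intro j
    by_cases hj : j < L
    · rw [rotl_bit _ j hj, rotl_bit _ j hj]
      have := hd ((j : ℤ) - (y + d))
      rw [show (j : ℤ) - (y + d) + d = (j : ℤ) - y by ring] at this
      rw [← this]
    · have h2 : (2 : ℕ) ^ L ≤ 2 ^ j := Nat.pow_le_pow_right (by norm_num) (by omega)
      rw [Nat.testBit_lt_two_pow (lt_of_lt_of_le (rotl_lt L hL0 _ a) h2),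
        Nat.testBit_lt_two_pow (lt_of_lt_of_le (rotl_lt L hL0 _ a) h2)]
  have key1 : ∀ x y : ℤ, rotl L x a = rotl L y a → x - y ∈ S := by
    intro x y h k
    have hbit : ∀ j : ℕ, j < L → fA ((j : ℤ) - x) = fA ((j : ℤ) - y) := by
      intro j hj
      rw [← rotl_bit x j hj, ← rotl_bit y j hj, h]
    set m : ℤ := (k + x) % (L : ℤ) with hm
    have hmem := emod_mem (L : ℤ) (k + x) hL'
    set n : ℕ := m.toNat with hn
    have hnL : n < L := by omega
    have hcast : (n : ℤ) = m := Int.toNat_of_nonneg hmem.1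
    have e1 : fA ((n : ℤ) - x) = fA k := by
      apply fA_congr
      rw [hcast, hm, Int.sub_emod, Int.emod_emod_of_dvd _ dvd_rfl, ← Int.sub_emod,
        add_sub_cancel_right]
    have e2 : fA ((n : ℤ) - y) = fA (k + (x - y)) := by
      apply fA_congr
      rw [hcast, hm, Int.sub_emod, Int.emod_emod_of_dvd _ dvd_rfl, ← Int.sub_emod]
      ring_nf
    rw [← e1, ← e2, hbit n hnL]
  have claimA : ∀ τ : ℕ, τ ∣ L → 0 < τ →
      (∃ a' : ℕ, a' < 2 ^ τ ∧ a = ∑ i ∈ Finset.range (L / τ), a' * 2 ^ (τ * i)) →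
      (τ : ℤ) ∈ S := by
    rintro τ hdvd hτ0 ⟨a', ha', hper⟩ j
    have hbit : ∀ n : ℕ, a.testBit n = if n < L then a'.testBit (n % τ) else false := by
      intro n
      conv_lhs => rw [hper]
      rw [block_testBit τ _ a' hτ0 ha', Nat.mul_div_cancel' hdvd]
    have hdvd' : (τ : ℤ) ∣ (L : ℤ) := Int.natCast_dvd_natCast.mpr hdvd
    have h1 := emod_mem (L : ℤ) (j + τ) hL'
    have h2 := emod_mem (L : ℤ) j hL'
    have hlt1 : ((j + (τ : ℤ)) % (L : ℤ)).toNat < L := by omega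
    have hlt2 : ((j % (L : ℤ))).toNat < L := by omega
    have hmod : ((j + (τ : ℤ)) % (L : ℤ)).toNat % τ = (j % (L : ℤ)).toNat % τ := by
      apply toNat_mod_eq τ _ _ h1.1 h2.1
      rw [Int.emod_emod_of_dvd _ hdvd', Int.emod_emod_of_dvd _ hdvd']
      conv_lhs => rw [show j + (τ : ℤ) = j + (τ : ℤ) * 1 by ring]
      rw [Int.add_mul_emod_self_left]
    simp only [hfA, hbit, hlt1, hlt2, if_true, hmod]
  have claimB : ∀ τ : ℕ, τ ∣ L → 0 < τ → (τ : ℤ) ∈ S →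
      ∃ a' : ℕ, a' < 2 ^ τ ∧ a = ∑ i ∈ Finset.range (L / τ), a' * 2 ^ (τ * i) := by
    intro τ hdvd hτ0 hτS
    refine ⟨a % 2 ^ τ, Nat.mod_lt _ (by positivity), ?_⟩
    apply Nat.eq_of_testBit_eq
    intro n
    rw [block_testBit τ _ _ hτ0 (Nat.mod_lt _ (by positivity)), Nat.mul_div_cancel' hdvd]
    by_cases hn : n < L
    · have hmem : (n / τ) • (τ : ℤ) ∈ S := nsmul_mem hτS _
      have h := hmem ((n % τ : ℕ) : ℤ)
      have hτL : τ ≤ L := Nat.le_of_dvd hL0 hdvd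
      have hrw : ((n % τ : ℕ) : ℤ) + (n / τ) • (τ : ℤ) = (n : ℤ) := by
        rw [nsmul_eq_mul]
        exact_mod_cast Nat.mod_add_div' n τ
      rw [hrw, fA_nat n hn, fA_nat (n % τ) (lt_of_lt_of_le (Nat.mod_lt _ hτ0) hτL)] at h
      simp [hn, Nat.testBit_mod_two_pow, Nat.mod_lt n hτ0, h]
    · have h2 : (2 : ℕ) ^ L ≤ 2 ^ n := Nat.pow_le_pow_right (by norm_num) (by omega)
      simp [hn, Nat.testBit_lt_two_pow (lt_of_lt_of_le ha h2)]
  constructor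
  · rintro ⟨x, hx, hx_uniq⟩ ⟨τ, hτL, hτdvd, hper⟩
    have hτ0 : 0 < τ := Nat.pos_of_dvd_of_pos hτdvd hL0
    have hτS : (τ : ℤ) ∈ S := claimA τ hτdvd hτ0 hper
    set x1 : ℕ := (x0 + τ) % L with hx1
    have hx1L : x1 < L := Nat.mod_lt _ hL0
    have hx1b : rotl L (x1 : ℤ) a = b := by
      set w : ℤ := (x0 : ℤ) + (τ : ℤ) with hw
      have hcast : (x1 : ℤ) = w % (L : ℤ) := by
        rw [hx1, hw, Int.natCast_mod]; push_cast; ring_nf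
      have hd : w % (L : ℤ) - w = (-(w / L)) • (L : ℤ) := by
        rw [Int.emod_def]; simp [zsmul_eq_mul]; ring
      have e1 : rotl L (w % (L : ℤ)) a = rotl L w a := by
        have := key2 w ((-(w / L)) • (L : ℤ)) (zsmul_mem hLS _)
        rw [← hd] at this
        rw [show w + (w % (L:ℤ) - w) = w % (L:ℤ) by ring] at this
        exact this
      have e2 : rotl L w a = rotl L (x0 : ℤ) a := key2 (x0 : ℤ) (τ : ℤ) hτS
      rw [hcast, e1, e2, hx0]
    have h1 := hx_uniq x1 ⟨hx1L, hx1b⟩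
    have h2 := hx_uniq x0 ⟨hx0L, hx0⟩
    have : x1 = x0 := h1.trans h2.symm
    rw [hx1] at this
    rcases Nat.lt_or_ge (x0 + τ) L with hc | hc
    · rw [Nat.mod_eq_of_lt hc] at this; omega
    · rw [Nat.mod_eq_sub_mod hc, Nat.mod_eq_of_lt (by omega)] at this; omega
  · intro hno
    refine ⟨x0, ⟨hx0L, hx0⟩, ?_⟩
    rintro y ⟨hyL, hy⟩
    by_contra hne
    have hdS : ((y : ℤ) - (x0 : ℤ)) ∈ S := key1 _ _ (hy.trans hx0.symm)
    set d : ℤ := (y : ℤ) - (x0 : ℤ) with hd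
    have hd0 : d ≠ 0 := by
      simp only [hd, sub_ne_zero]
      exact_mod_cast hne
    set τ : ℕ := Int.gcd d (L : ℤ) with hτ
    have hτdvd' : (τ : ℤ) ∣ (L : ℤ) := Int.gcd_dvd_right _ _
    have hτdvdL : τ ∣ L := Int.natCast_dvd_natCast.mp hτdvd'
    have hτ0 : 0 < τ := Int.gcd_pos_iff.mpr (Or.inl hd0)
    have hτlt : τ < L := by
      have h1 : (τ : ℤ) ∣ d := Int.gcd_dvd_left _ _
      have h2 : τ ∣ d.natAbs := by
        rw [Int.natCast_dvd] at h1; exact h1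
      have h3 : d.natAbs < L := by
        simp only [hd]
        omega
      have h4 : d.natAbs ≠ 0 := by omega
      exact lt_of_le_of_lt (Nat.le_of_dvd (by omega) h2) h3
    have hτS : (τ : ℤ) ∈ S := by
      have hbez : (τ : ℤ) = d * Int.gcdA d (L : ℤ) + (L : ℤ) * Int.gcdB d (L : ℤ) :=
        Int.gcd_eq_gcd_ab d (L : ℤ)
      rw [hbez]
      exact add_mem (by rw [mul_comm, ← smul_eq_mul]; exact zsmul_mem hdS _)
        (by rw [mul_comm, ← smul_eq_mul]; exact zsmul_mem hLS _)
    exact hno ⟨τ, hτlt, hτdvdL, claimB τ hτdvdL hτ0 hτS⟩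
end
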